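/- Fix real numbers α ≠ 0 and β, and real numbers a₁,…,a₆ and X₁,…,X₆. Let g be the 7×7 matrix with rows (1, 0, −(α/2)a₁, −(α/2)a₂, (α/2)a₃, (α/2)a₄, a₅), (0, 1, 0, 0, −(β/2)a₂, (β/2)a₁, a₆), (0, 0, 1, 0, 0, 0, a₃), (0, 0, 0, 1, 0, 0, a₄), (0, 0, 0, 0, 1, 0, a₁), (0, 0, 0, 0, 0, 1, a₂), (0, 0, 0, 0, 0, 0, 1), and let F be the 7×7 matrix whose only nonzero entries are in the last row, equal to (X₅, X₆, X₃, X₄, X₁, X₂, 0). Then g is invertible, and the first six entries of the last row of g F g⁻¹ are (X₅′, X₆′, X₃′, X₄′, X₁′, X₂′), where X₁′ = X₁ − (α/2)a₃X₅ + (β/2)a₂X₆, X₂′ = X₂ − (α/2)a₄X₅ − (β/2)a₁X₆, X₃′ = X₃ + (α/2)a₁X₅, X₄′ = X₄ + (α/2)a₂X₅, X₅′ = X₅, and X₆′ = X₆. -/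

import Mathlib

noncomputable section

/-- The group element of the noncommutative Weyl–Heisenberg group as a 7×7 matrix,
with parameters `a₁, …, a₆` and extension parameters `α`, `β`. -/
def gMat (α β a₁ a₂ a₃ a₄ a₅ a₆ : ℝ) : Matrix (Fin 7) (Fin 7) ℝ :=
  !![1, 0, -(α / 2) * a₁, -(α / 2) * a₂, (α / 2) * a₃, (α / 2) * a₄, a₅;
     0, 1, 0, 0, -(β / 2) * a₂, (β / 2) * a₁, a₆;
     0, 0, 1, 0, 0, 0, a₃;
     0, 0, 0, 1, 0, 0, a₄;
     0, 0, 0, 0, 1, 0, a₁;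
     0, 0, 0, 0, 0, 1, a₂;
     0, 0, 0, 0, 0, 0, 1]

/-- The dual Lie algebra element `F` as a 7×7 matrix whose only nonzero entries are
in the last row, equal to `(X₅, X₆, X₃, X₄, X₁, X₂, 0)`. -/
def FMat (X₁ X₂ X₃ X₄ X₅ X₆ : ℝ) : Matrix (Fin 7) (Fin 7) ℝ :=
  !![0, 0, 0, 0, 0, 0, 0;
     0, 0, 0, 0, 0, 0, 0;
     0, 0, 0, 0, 0, 0, 0;
     0, 0, 0, 0, 0, 0, 0;
     0, 0, 0, 0, 0, 0, 0;
     0, 0, 0, 0, 0, 0, 0;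
     X₅, X₆, X₃, X₄, X₁, X₂, 0]

/-!
In these coordinates the group law only adds the `aᵢ` (plus cocycle terms in `a₅`, `a₆` that
vanish for `b = -a`), so `g(a)⁻¹ = g(-a)`. The last row of `g` is the last standard basis row,
hence the last row of `g F g⁻¹` is the last row `(X₅, X₆, X₃, X₄, X₁, X₂, 0)` of `F` times
`g(-a)`, which is read off entry by entry.
-/

namespace Matrix

variable {m n o R : Type*} [Fintype m] [DecidableEq m] [Fintype n] [NonAssocSemiring R]

theorem mul_mul_apply_eq_vecMul_of_row_eq_single {A : Matrix m m R} {i : m}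
    (hA : A i = Pi.single i 1) (B : Matrix m n R) (C : Matrix n o R) :
    (A * B * C) i = B i ᵥ* C := by
  rw [mul_apply_eq_vecMul, mul_apply_eq_vecMul, hA, single_one_vecMul]
  rfl

end Matrix

open Matrix

theorem gMat_mul (α β a₁ a₂ a₃ a₄ a₅ a₆ b₁ b₂ b₃ b₄ b₅ b₆ : ℝ) :
    gMat α β a₁ a₂ a₃ a₄ a₅ a₆ * gMat α β b₁ b₂ b₃ b₄ b₅ b₆ =
      gMat α β (a₁ + b₁) (a₂ + b₂) (a₃ + b₃) (a₄ + b₄)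
        (a₅ + b₅ + α / 2 * (a₃ * b₁ + a₄ * b₂ - a₁ * b₃ - a₂ * b₄))
        (a₆ + b₆ + β / 2 * (a₁ * b₂ - a₂ * b₁)) := by
  ext i j
  fin_cases i <;> fin_cases j <;> simp [gMat, mul_apply, Fin.sum_univ_succ] <;> ring

theorem gMat_zero (α β : ℝ) : gMat α β 0 0 0 0 0 0 = 1 := by
  ext i j
  fin_cases i <;> fin_cases j <;> simp [gMat]

theorem gMat_mul_gMat_neg (α β a₁ a₂ a₃ a₄ a₅ a₆ : ℝ) :
    gMat α β a₁ a₂ a₃ a₄ a₅ a₆ * gMat α β (-a₁) (-a₂) (-a₃) (-a₄) (-a₅) (-a₆) = 1 := by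
  rw [gMat_mul, ← gMat_zero α β]
  congr 1 <;> ring

theorem inv_gMat (α β a₁ a₂ a₃ a₄ a₅ a₆ : ℝ) :
    (gMat α β a₁ a₂ a₃ a₄ a₅ a₆)⁻¹ = gMat α β (-a₁) (-a₂) (-a₃) (-a₄) (-a₅) (-a₆) :=
  inv_eq_right_inv (gMat_mul_gMat_neg ..)

theorem isUnit_gMat (α β a₁ a₂ a₃ a₄ a₅ a₆ : ℝ) : IsUnit (gMat α β a₁ a₂ a₃ a₄ a₅ a₆) :=
  (isUnit_iff_isUnit_det _).2 (isUnit_det_of_right_inverse (gMat_mul_gMat_neg ..))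

theorem gMat_apply_last (α β a₁ a₂ a₃ a₄ a₅ a₆ : ℝ) :
    gMat α β a₁ a₂ a₃ a₄ a₅ a₆ 6 = Pi.single 6 1 := by
  ext j
  fin_cases j <;> simp [gMat]

theorem gMat_mul_FMat_mul_inv_apply_last (α β a₁ a₂ a₃ a₄ a₅ a₆ X₁ X₂ X₃ X₄ X₅ X₆ : ℝ) :
    (gMat α β a₁ a₂ a₃ a₄ a₅ a₆ * FMat X₁ X₂ X₃ X₄ X₅ X₆ * (gMat α β a₁ a₂ a₃ a₄ a₅ a₆)⁻¹) 6 =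
      ![X₅, X₆, X₃, X₄, X₁, X₂, 0] ᵥ* gMat α β (-a₁) (-a₂) (-a₃) (-a₄) (-a₅) (-a₆) := by
  rw [mul_mul_apply_eq_vecMul_of_row_eq_single (gMat_apply_last ..), inv_gMat]
  rfl

theorem coadjoint_action_general (α β : ℝ) (a₁ a₂ a₃ a₄ a₅ a₆ X₁ X₂ X₃ X₄ X₅ X₆ : ℝ) :
    IsUnit (gMat α β a₁ a₂ a₃ a₄ a₅ a₆) ∧
    (gMat α β a₁ a₂ a₃ a₄ a₅ a₆ * FMat X₁ X₂ X₃ X₄ X₅ X₆ *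
        (gMat α β a₁ a₂ a₃ a₄ a₅ a₆)⁻¹) 6 0 = X₅ ∧
    (gMat α β a₁ a₂ a₃ a₄ a₅ a₆ * FMat X₁ X₂ X₃ X₄ X₅ X₆ *
        (gMat α β a₁ a₂ a₃ a₄ a₅ a₆)⁻¹) 6 1 = X₆ ∧
    (gMat α β a₁ a₂ a₃ a₄ a₅ a₆ * FMat X₁ X₂ X₃ X₄ X₅ X₆ *
        (gMat α β a₁ a₂ a₃ a₄ a₅ a₆)⁻¹) 6 2 = X₃ + (α / 2) * a₁ * X₅ ∧
    (gMat α β a₁ a₂ a₃ a₄ a₅ a₆ * FMat X₁ X₂ X₃ X₄ X₅ X₆ *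
        (gMat α β a₁ a₂ a₃ a₄ a₅ a₆)⁻¹) 6 3 = X₄ + (α / 2) * a₂ * X₅ ∧
    (gMat α β a₁ a₂ a₃ a₄ a₅ a₆ * FMat X₁ X₂ X₃ X₄ X₅ X₆ *
        (gMat α β a₁ a₂ a₃ a₄ a₅ a₆)⁻¹) 6 4
      = X₁ - (α / 2) * a₃ * X₅ + (β / 2) * a₂ * X₆ ∧
    (gMat α β a₁ a₂ a₃ a₄ a₅ a₆ * FMat X₁ X₂ X₃ X₄ X₅ X₆ *
        (gMat α β a₁ a₂ a₃ a₄ a₅ a₆)⁻¹) 6 5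
      = X₂ - (α / 2) * a₄ * X₅ - (β / 2) * a₁ * X₆ := by
  refine ⟨isUnit_gMat .., ?_, ?_, ?_, ?_, ?_, ?_⟩ <;>
    rw [gMat_mul_FMat_mul_inv_apply_last] <;>
    simp [gMat, vecMul, dotProduct, Fin.sum_univ_succ] <;> ring

/-- The coadjoint action of the noncommutative Weyl–Heisenberg group: `g` is
invertible, and the first six entries of the last row of `g F g⁻¹` are
`(X₅′, X₆′, X₃′, X₄′, X₁′, X₂′)` with `X₁′ = X₁ − (α/2)a₃X₅ + (β/2)a₂X₆`,
`X₂′ = X₂ − (α/2)a₄X₅ − (β/2)a₁X₆`, `X₃′ = X₃ + (α/2)a₁X₅`, `X₄′ = X₄ + (α/2)a₂X₅`,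
`X₅′ = X₅`, `X₆′ = X₆`. -/
theorem coadjoint_action (α β : ℝ) (hα : α ≠ 0) (a₁ a₂ a₃ a₄ a₅ a₆ X₁ X₂ X₃ X₄ X₅ X₆ : ℝ) :
    IsUnit (gMat α β a₁ a₂ a₃ a₄ a₅ a₆) ∧
    (gMat α β a₁ a₂ a₃ a₄ a₅ a₆ * FMat X₁ X₂ X₃ X₄ X₅ X₆ *
        (gMat α β a₁ a₂ a₃ a₄ a₅ a₆)⁻¹) 6 0 = X₅ ∧
    (gMat α β a₁ a₂ a₃ a₄ a₅ a₆ * FMat X₁ X₂ X₃ X₄ X₅ X₆ *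
        (gMat α β a₁ a₂ a₃ a₄ a₅ a₆)⁻¹) 6 1 = X₆ ∧
    (gMat α β a₁ a₂ a₃ a₄ a₅ a₆ * FMat X₁ X₂ X₃ X₄ X₅ X₆ *
        (gMat α β a₁ a₂ a₃ a₄ a₅ a₆)⁻¹) 6 2 = X₃ + (α / 2) * a₁ * X₅ ∧
    (gMat α β a₁ a₂ a₃ a₄ a₅ a₆ * FMat X₁ X₂ X₃ X₄ X₅ X₆ *
        (gMat α β a₁ a₂ a₃ a₄ a₅ a₆)⁻¹) 6 3 = X₄ + (α / 2) * a₂ * X₅ ∧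
    (gMat α β a₁ a₂ a₃ a₄ a₅ a₆ * FMat X₁ X₂ X₃ X₄ X₅ X₆ *
        (gMat α β a₁ a₂ a₃ a₄ a₅ a₆)⁻¹) 6 4
      = X₁ - (α / 2) * a₃ * X₅ + (β / 2) * a₂ * X₆ ∧
    (gMat α β a₁ a₂ a₃ a₄ a₅ a₆ * FMat X₁ X₂ X₃ X₄ X₅ X₆ *
        (gMat α β a₁ a₂ a₃ a₄ a₅ a₆)⁻¹) 6 5
      = X₂ - (α / 2) * a₄ * X₅ - (β / 2) * a₁ * X₆ :=
  coadjoint_action_general α β a₁ a₂ a₃ a₄ a₅ a₆ X₁ X₂ X₃ X₄ X₅ X₆
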